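/- arXiv:1801.04088 — 2 statements merged into one kernel-verified Lean document; each statement's English description precedes it below -/
import Mathlib

section
/- Suppose the graph is connected and Assumption (β) holds, and let Ω ⊆ V be finite, nonempty and Ω ≠ V. Then the smallest and the largest value of the real Rayleigh quotient of Δ̃^D_Ω sum to at most 2: inf{ Re (Δ̃^D_Ω f, f)_{β⁺} / (f,f)_{β⁺} : f : Ω → ℂ, f ≠ 0 } + sup{ Re (Δ̃^D_Ω f, f)_{β⁺} / (f,f)_{β⁺} : f : Ω → ℂ, f ≠ 0 } ≤ 2. -/
/-! Write `E(f) = Re (Δ̃^D_Ω f, f)` and `N(f) = (f, f)`. Expanding the Laplacian gives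
`E(f) = N(f) - Q(f)` with `Q(f) = Σ_{x,y ∈ Ω} b(x,y) Re (f(y) · conj f(x))`, the neighbours outside
`Ω` contributing only to the diagonal. Since `|Q(f)| ≤ Q(|f|)` and `N(|f|) = N(f)`, we get
`E(|f|) + E(f) ≤ 2 N(f)`: every Rayleigh quotient is at most `2` minus the one of `|f|`, hence at
most `2 - inf`. By the Schur test, with row sums bounded by `β⁺` and column sums by `β⁻ = β⁺`,
`Q(|f|) ≤ N(f)`: the quotients are nonnegative, so the set is bounded below and its `sInf` is
not a junk value. -/

open Function Complex

noncomputable def betaPlus {V : Type*} (b : V → V → ℝ) (x : V) : ℝ := ∑ᶠ y, b x y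
noncomputable def betaMinus {V : Type*} (b : V → V → ℝ) (x : V) : ℝ := ∑ᶠ y, b y x

/-- The graph is connected: any two vertices are joined by a chain of edges (in either
direction). -/
def GraphConnected {V : Type*} (b : V → V → ℝ) : Prop :=
  ∀ x y : V, ∃ (k : ℕ) (c : ℕ → V), c 0 = x ∧ c k = y ∧
    ∀ i < k, 0 < b (c i) (c (i + 1)) + b (c (i + 1)) (c i)

/-- Extension by zero of a function on `Ω` to all of `V`. -/
noncomputable def extendZero {V : Type*} [DecidableEq V] (Ω : Finset V) (f : ↥Ω → ℂ) :
    V → ℂ :=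
  fun x => if h : x ∈ Ω then f ⟨x, h⟩ else 0

/-- The Dirichlet normalized Laplacian on a finite set `Ω`:
`(Δ̃^D_Ω f)(x) = (1/β⁺(x)) Σ_y b(x,y)(f̃(x) − f̃(y))` where `f̃` extends `f` by zero. -/
noncomputable def dirichletLap {V : Type*} [DecidableEq V] (b : V → V → ℝ) (w : V → ℝ)
    (Ω : Finset V) (f : ↥Ω → ℂ) (x : ↥Ω) : ℂ :=
  (1 / (w (x : V) : ℂ)) *
    ∑ᶠ y : V, (b (x : V) y : ℂ) * (extendZero Ω f (x : V) - extendZero Ω f y)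

/-- The weighted inner product on functions on the finite set `Ω`. -/
noncomputable def innerF {V : Type*} (w : V → ℝ) (Ω : Finset V) (f g : ↥Ω → ℂ) : ℂ :=
  ∑ x : ↥Ω, (w (x : V) : ℂ) * f x * (starRingEnd ℂ) (g x)

open ComplexConjugate

theorem Finset.sum_le_finsum_of_nonneg {α M : Type*} [AddCommMonoid M] [PartialOrder M]
    [IsOrderedAddMonoid M] {f : α → M} (hf : ∀ i, 0 ≤ f i)
    (hfin : (support f).Finite) (s : Finset α) : ∑ i ∈ s, f i ≤ ∑ᶠ i, f i := by
  classical
  rw [finsum_eq_sum_of_support_subset f (s := s ∪ hfin.toFinset) (by simp)]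
  exact Finset.sum_le_sum_of_subset_of_nonneg Finset.subset_union_left fun i _ _ => hf i

theorem sum_mul_mul_le_sum_mul_sq {ι : Type*} [Fintype ι] {a : ι → ι → ℝ} {w : ι → ℝ}
    (ha : ∀ i j, 0 ≤ a i j) (hrow : ∀ i, ∑ j, a i j ≤ w i) (hcol : ∀ j, ∑ i, a i j ≤ w j)
    (u : ι → ℝ) : ∑ i, ∑ j, a i j * (u i * u j) ≤ ∑ i, w i * u i ^ 2 := by
  have hrow' : ∑ i, ∑ j, a i j * (u i ^ 2 / 2) ≤ ∑ i, w i * (u i ^ 2 / 2) :=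
    Finset.sum_le_sum fun i _ => by
      rw [← Finset.sum_mul]; exact mul_le_mul_of_nonneg_right (hrow i) (by positivity)
  have hcol' : ∑ i, ∑ j, a i j * (u j ^ 2 / 2) ≤ ∑ j, w j * (u j ^ 2 / 2) := by
    rw [Finset.sum_comm]
    refine Finset.sum_le_sum fun j _ => ?_
    rw [← Finset.sum_mul]; exact mul_le_mul_of_nonneg_right (hcol j) (by positivity)
  calc ∑ i, ∑ j, a i j * (u i * u j)
      ≤ ∑ i, ∑ j, (a i j * (u i ^ 2 / 2) + a i j * (u j ^ 2 / 2)) := by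
        gcongr with i _ j _
        rw [← mul_add]
        exact mul_le_mul_of_nonneg_left (by nlinarith [sq_nonneg (u i - u j)]) (ha i j)
    _ ≤ ∑ i, w i * (u i ^ 2 / 2) + ∑ i, w i * (u i ^ 2 / 2) := by
        simp only [Finset.sum_add_distrib]; exact add_le_add hrow' hcol'
    _ = ∑ i, w i * u i ^ 2 := by rw [← Finset.sum_add_distrib]; ring_nf

theorem csInf_add_csSup_le {S : Set ℝ} (hne : S.Nonempty) (hbdd : BddBelow S) {c : ℝ}
    (h : ∀ r ∈ S, ∃ s ∈ S, s + r ≤ c) : sInf S + sSup S ≤ c := by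
  suffices sSup S ≤ c - sInf S by linarith
  refine csSup_le hne fun r hr => ?_
  obtain ⟨s, hs, hsr⟩ := h r hr
  linarith [csInf_le hbdd hs]

theorem abs_sum_mul_re_mul_conj_le {ι : Type*} [Fintype ι] {a : ι → ι → ℝ}
    (ha : ∀ i j, 0 ≤ a i j) (f : ι → ℂ) :
    |∑ i, ∑ j, a i j * (f j * conj (f i)).re| ≤ ∑ i, ∑ j, a i j * (‖f i‖ * ‖f j‖) := by
  refine (Finset.abs_sum_le_sum_abs _ _).trans (Finset.sum_le_sum fun i _ => ?_)
  refine (Finset.abs_sum_le_sum_abs _ _).trans (Finset.sum_le_sum fun j _ => ?_)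
  rw [abs_mul, abs_of_nonneg (ha i j), mul_comm ‖f i‖]
  refine mul_le_mul_of_nonneg_left ((abs_re_le_norm _).trans_eq ?_) (ha i j)
  simp

section DirichletLaplacian

variable {V : Type*} {b : V → V → ℝ}

theorem extendZero_coe [DecidableEq V] (Ω : Finset V) (f : ↥Ω → ℂ) (x : ↥Ω) :
    extendZero Ω f x = f x := by
  simp [extendZero]

theorem extendZero_eq_zero [DecidableEq V] {Ω : Finset V} (f : ↥Ω → ℂ) {v : V} (hv : v ∉ Ω) :
    extendZero Ω f v = 0 := by
  simp [extendZero, hv]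

theorem re_innerF_self (w : V → ℝ) (Ω : Finset V) (f : ↥Ω → ℂ) :
    (innerF w Ω f f).re = ∑ x : ↥Ω, w x * ‖f x‖ ^ 2 := by
  simp only [innerF, re_sum, mul_assoc, mul_conj, ← ofReal_mul, ofReal_re,
    normSq_eq_norm_sq]

theorem re_innerF_self_pos {w : V → ℝ} (hw : ∀ x, 0 < w x) {Ω : Finset V} {f : ↥Ω → ℂ}
    (hf : f ≠ 0) : 0 < (innerF w Ω f f).re := by
  obtain ⟨x, hx⟩ := Function.ne_iff.mp hf
  rw [re_innerF_self]
  exact Finset.sum_pos' (fun y _ => mul_nonneg (hw y).le (sq_nonneg _))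
    ⟨x, Finset.mem_univ x, mul_pos (hw x) (pow_pos (norm_pos_iff.mpr hx) 2)⟩

theorem sum_le_betaPlus (hb : ∀ x y, 0 ≤ b x y) (hrow : ∀ x, (support (b x)).Finite)
    (Ω : Finset V) (x : V) : ∑ y : ↥Ω, b x y ≤ betaPlus b x := by
  rw [Finset.sum_coe_sort Ω (b x)]
  exact Finset.sum_le_finsum_of_nonneg (hb x) (hrow x) Ω

theorem sum_le_betaMinus (hb : ∀ x y, 0 ≤ b x y) (hcol : ∀ y, (support (b · y)).Finite)
    (Ω : Finset V) (y : V) : ∑ x : ↥Ω, b x y ≤ betaMinus b y := by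
  rw [Finset.sum_coe_sort Ω (b · y)]
  exact Finset.sum_le_finsum_of_nonneg (hb · y) (hcol y) Ω

theorem dirichletLap_apply [DecidableEq V] (hrow : ∀ x, (support (b x)).Finite) {w : V → ℝ}
    (Ω : Finset V) (f : ↥Ω → ℂ) (x : ↥Ω) :
    dirichletLap b w Ω f x = (betaPlus b x * f x - ∑ y : ↥Ω, b x y * f y) / w x := by
  set F := extendZero Ω f
  set s := (hrow x).toFinset ∪ Ω
  have hβ : ((betaPlus b x : ℝ) : ℂ) = ∑ y ∈ s, (b x y : ℂ) := by
    rw [betaPlus, finsum_eq_sum_of_support_subset _ (s := s) (by simp [s]), ofReal_sum]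
  have hΩ : ∑ y ∈ s, (b x y : ℂ) * F y = ∑ y : ↥Ω, b x y * f y := by
    rw [← Finset.sum_subset (Finset.subset_union_right (s₁ := (hrow x).toFinset))
      fun y _ hy => by simp [F, extendZero_eq_zero f hy], ← Finset.sum_coe_sort Ω]
    simp [F, extendZero_coe]
  rw [dirichletLap, finsum_eq_sum_of_support_subset _ (s := s) fun y hy => by
      simp only [s, Finset.coe_union, Set.Finite.coe_toFinset]
      exact Or.inl fun h => hy (by simp [h]),
    ← hΩ, hβ, extendZero_coe, Finset.sum_mul, ← Finset.sum_sub_distrib, one_div_mul_eq_div]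
  simp only [F, mul_sub]

theorem re_innerF_dirichletLap_self [DecidableEq V] (hrow : ∀ x, (support (b x)).Finite)
    {w : V → ℝ} (hw : ∀ x, w x ≠ 0) (Ω : Finset V) (f : ↥Ω → ℂ) :
    (innerF w Ω (dirichletLap b w Ω f) f).re =
      ∑ x : ↥Ω, betaPlus b x * ‖f x‖ ^ 2 - ∑ x : ↥Ω, ∑ y : ↥Ω, b x y * (f y * conj (f x)).re := by
  have hterm : ∀ x : ↥Ω, (w x : ℂ) * dirichletLap b w Ω f x * conj (f x) =
      betaPlus b x * (f x * conj (f x)) - ∑ y : ↥Ω, b x y * (f y * conj (f x)) := by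
    intro x
    rw [dirichletLap_apply hrow, mul_div_cancel₀ _ (ofReal_ne_zero.mpr (hw x)), sub_mul,
      Finset.sum_mul]
    simp only [mul_assoc]
  simp only [innerF, hterm, re_sum, sub_re, re_ofReal_mul, mul_conj, ofReal_re,
    normSq_eq_norm_sq, Finset.sum_sub_distrib]

theorem re_innerF_dirichletLap_self_nonneg [DecidableEq V] (hb : ∀ x y, 0 ≤ b x y)
    (hrow : ∀ x, (support (b x)).Finite) (hcol : ∀ y, (support (b · y)).Finite)
    (hβ_ne : ∀ x, betaPlus b x ≠ 0) (hβ : ∀ x, betaPlus b x = betaMinus b x)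
    (Ω : Finset V) (f : ↥Ω → ℂ) :
    0 ≤ (innerF (betaPlus b) Ω (dirichletLap b (betaPlus b) Ω f) f).re := by
  have hschur : ∑ x : ↥Ω, ∑ y : ↥Ω, b x y * (‖f x‖ * ‖f y‖) ≤
      ∑ x : ↥Ω, betaPlus b x * ‖f x‖ ^ 2 :=
    sum_mul_mul_le_sum_mul_sq (a := fun x y : ↥Ω => b x y) (w := fun x : ↥Ω => betaPlus b x)
      (fun x y => hb x y) (fun x => sum_le_betaPlus hb hrow Ω x)
      (fun y => (sum_le_betaMinus hb hcol Ω y).trans_eq (hβ y).symm) _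
  rw [re_innerF_dirichletLap_self hrow hβ_ne, sub_nonneg]
  exact (le_abs_self _).trans
    ((abs_sum_mul_re_mul_conj_le (a := fun x y : ↥Ω => b x y) (fun x y => hb x y) f).trans hschur)

theorem re_innerF_dirichletLap_norm_add_le [DecidableEq V] (hb : ∀ x y, 0 ≤ b x y)
    (hrow : ∀ x, (support (b x)).Finite) (hβ_ne : ∀ x, betaPlus b x ≠ 0)
    (Ω : Finset V) (f : ↥Ω → ℂ) :
    (innerF (betaPlus b) Ω (dirichletLap b (betaPlus b) Ω fun x => (‖f x‖ : ℂ))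
        fun x => (‖f x‖ : ℂ)).re +
      (innerF (betaPlus b) Ω (dirichletLap b (betaPlus b) Ω f) f).re ≤
      2 * (innerF (betaPlus b) Ω f f).re := by
  have hQ : ∑ x : ↥Ω, ∑ y : ↥Ω, b x y * ((‖f y‖ : ℂ) * conj (‖f x‖ : ℂ)).re =
      ∑ x : ↥Ω, ∑ y : ↥Ω, b x y * (‖f x‖ * ‖f y‖) := by
    refine Finset.sum_congr rfl fun x _ => Finset.sum_congr rfl fun y _ => ?_
    rw [conj_ofReal, ← ofReal_mul, ofReal_re, mul_comm ‖f y‖]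
  rw [re_innerF_dirichletLap_self hrow hβ_ne, re_innerF_dirichletLap_self hrow hβ_ne,
    re_innerF_self, hQ]
  simp only [norm_real, Real.norm_eq_abs, abs_norm]
  linarith [neg_abs_le (∑ x : ↥Ω, ∑ y : ↥Ω, b x y * (f y * conj (f x)).re),
    abs_sum_mul_re_mul_conj_le (a := fun x y : ↥Ω => b x y) (fun x y => hb x y) f]

end DirichletLaplacian

theorem rayleigh_inf_add_sup_le_two_general
    (V : Type*) [DecidableEq V] (b : V → V → ℝ)
    (hb_nonneg : ∀ x y, 0 ≤ b x y)
    (hloc_fin : ∀ x, {y | b x y ≠ 0 ∨ b y x ≠ 0}.Finite)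
    (hβp_pos : ∀ x, 0 < betaPlus b x)
    (hβ : ∀ x, betaPlus b x = betaMinus b x)
    (Ω : Finset V) (hΩ : Ω.Nonempty) :
    sInf {r : ℝ | ∃ f : ↥Ω → ℂ, f ≠ 0 ∧
        r = (innerF (betaPlus b) Ω (dirichletLap b (betaPlus b) Ω f) f).re /
            (innerF (betaPlus b) Ω f f).re} +
    sSup {r : ℝ | ∃ f : ↥Ω → ℂ, f ≠ 0 ∧
        r = (innerF (betaPlus b) Ω (dirichletLap b (betaPlus b) Ω f) f).re /
            (innerF (betaPlus b) Ω f f).re} ≤ 2 := by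
  have hrow : ∀ x, (support (b x)).Finite := fun x => (hloc_fin x).subset fun _ => Or.inl
  have hcol : ∀ y, (support (b · y)).Finite := fun y => (hloc_fin y).subset fun _ => Or.inr
  have hβ_ne : ∀ x, betaPlus b x ≠ 0 := fun x => (hβp_pos x).ne'
  have : Nonempty ↥Ω := hΩ.to_subtype
  apply csInf_add_csSup_le
  · exact ⟨_, 1, one_ne_zero, rfl⟩
  · refine ⟨0, ?_⟩
    rintro _ ⟨f, hf, rfl⟩
    exact div_nonneg (re_innerF_dirichletLap_self_nonneg hb_nonneg hrow hcol hβ_ne hβ Ω f)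
      (re_innerF_self_pos hβp_pos hf).le
  · rintro _ ⟨f, hf, rfl⟩
    have hg : (fun x => (‖f x‖ : ℂ)) ≠ 0 := fun h =>
      hf (funext fun x => by simpa using congrFun h x)
    have hNg : (innerF (betaPlus b) Ω (fun x => (‖f x‖ : ℂ)) fun x => (‖f x‖ : ℂ)).re =
        (innerF (betaPlus b) Ω f f).re := by
      simp only [re_innerF_self, norm_real, Real.norm_eq_abs, abs_norm]
    refine ⟨_, ⟨_, hg, rfl⟩, ?_⟩
    rw [hNg, ← add_div, div_le_iff₀ (re_innerF_self_pos hβp_pos hf)]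
    exact re_innerF_dirichletLap_norm_add_le hb_nonneg hrow hβ_ne Ω f

/-- Suppose the graph is connected and Assumption (β) holds, and let
`Ω ⊆ V` be finite, nonempty and `Ω ≠ V`. Then the smallest and the largest value of the
real Rayleigh quotient of `Δ̃^D_Ω` sum to at most `2`. -/
theorem rayleigh_inf_add_sup_le_two
    (V : Type*) [Countable V] [DecidableEq V] (b : V → V → ℝ)
    (hb_nonneg : ∀ x y, 0 ≤ b x y)
    (hb_loop : ∀ x, b x x = 0)
    (hloc_fin : ∀ x, {y | b x y ≠ 0 ∨ b y x ≠ 0}.Finite)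
    (hβp_pos : ∀ x, 0 < betaPlus b x)
    (hβm_pos : ∀ x, 0 < betaMinus b x)
    (hβ : ∀ x, betaPlus b x = betaMinus b x)
    (hconn : GraphConnected b)
    (Ω : Finset V) (hΩ : Ω.Nonempty) (hΩne : ∃ v : V, v ∉ Ω) :
    sInf {r : ℝ | ∃ f : ↥Ω → ℂ, f ≠ 0 ∧
        r = (innerF (betaPlus b) Ω (dirichletLap b (betaPlus b) Ω f) f).re /
            (innerF (betaPlus b) Ω f f).re} +
    sSup {r : ℝ | ∃ f : ↥Ω → ℂ, f ≠ 0 ∧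
        r = (innerF (betaPlus b) Ω (dirichletLap b (betaPlus b) Ω f) f).re /
            (innerF (betaPlus b) Ω f f).re} ≤ 2 :=
  rayleigh_inf_add_sup_le_two_general V b hb_nonneg hloc_fin hβp_pos hβ Ω hΩ
end

section
/- Cheeger inequality: assume Assumption (β), let Ω ⊆ V be nonempty and suppose M_Ω = sup{ β⁺(x)/m(x) : x ∈ Ω } < ∞. Then h(Ω)²/8 ≤ M_Ω · ν(Δ^D_Ω) ≤ (1/2) M_Ω · h(Ω). -/
open Function Complex

/-- The Laplacian `Δf(x) = (1/m(x)) Σ_y b(x,y)(f(x) - f(y))`; the normalized Laplacian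
`Δ̃` is the case `m = β⁺`. -/
noncomputable def lap {V : Type*} (b : V → V → ℝ) (m : V → ℝ) (f : V → ℂ) (x : V) : ℂ :=
  (1 / (m x : ℂ)) * ∑ᶠ y, (b x y : ℂ) * (f x - f y)

/-- The weighted inner product `(f,g)_w = Σ_x w(x) f(x) conj(g(x))`. -/
noncomputable def innerW {V : Type*} (w : V → ℝ) (f g : V → ℂ) : ℂ :=
  ∑ᶠ x, (w x : ℂ) * f x * (starRingEnd ℂ) (g x)

/-- The total edge-boundary weight of a finite set `U`:
`b(∂_E U) = Σ_{x∈U, y∉U} b(x,y) + Σ_{x∉U, y∈U} b(x,y)`. -/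
noncomputable def bdryWeight {V : Type*} [DecidableEq V] (b : V → V → ℝ) (U : Finset V) :
    ℝ :=
  ∑ x ∈ U, ∑ᶠ y, (if y ∈ U then 0 else b x y + b y x)

/-- The Cheeger constant of `Ω ⊆ V` with respect to the weight `w`:
`h(Ω) = inf { b(∂_E U) / w(U) : U ⊆ Ω finite nonempty }`. -/
noncomputable def cheeger {V : Type*} [DecidableEq V] (b : V → V → ℝ) (w : V → ℝ)
    (Ω : Set V) : ℝ :=
  sInf {r : ℝ | ∃ U : Finset V, U.Nonempty ∧ ↑U ⊆ Ω ∧ r = bdryWeight b U / ∑ x ∈ U, w x}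

/-- The bottom of the real part of the numerical range of the Dirichlet Laplacian on `Ω`:
`ν(Δ^D_Ω) = inf { Re (Δf, f)_m : f finitely supported, supp f ⊆ Ω, ‖f‖_m = 1 }`. -/
noncomputable def nuD {V : Type*} (b : V → V → ℝ) (m : V → ℝ) (Ω : Set V) : ℝ :=
  sInf {r : ℝ | ∃ f : V → ℂ, (support f).Finite ∧ support f ⊆ Ω ∧
    innerW m f f = 1 ∧ r = (innerW m (lap b m f) f).re}

/-!
The upper bound tests `ν` against the normalized indicator of a finite `U ⊆ Ω`, whose Rayleigh
quotient is `b(∂U) / (2 m(U))`.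

For the lower bound, under (β) Green's formula gives `Re (Δf, f) = ½ Σ b(x,y) |f x - f y|²`.
Peeling off the lowest level set of `g = |f|²` (co-area) gives
`h(Ω) ‖f‖² ≤ Σ b(x,y) | |f x|² - |f y|² |`, and Cauchy–Schwarz bounds the right-hand side by
`(Σ b(x,y) (|f x| + |f y|)²)^½ (2 Re (Δf, f))^½`, where the first factor is at most `4 M ‖f‖²`
since `Σ_y b(x,y) = β⁺(x) = β⁻(x) ≤ M m(x)`.
-/

section

open Finset ComplexConjugate

variable {V : Type*} {b : V → V → ℝ} {m : V → ℝ}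

theorem exists_finset_superset_nbhd (hloc : ∀ x, {y | b x y ≠ 0 ∨ b y x ≠ 0}.Finite)
    {S : Set V} (hS : S.Finite) :
    ∃ T : Finset V, S ⊆ T ∧ ∀ x ∈ S, ∀ y, b x y ≠ 0 ∨ b y x ≠ 0 → y ∈ T := by
  refine ⟨(hS.union (hS.biUnion fun x _ => hloc x)).toFinset, fun x hx => ?_, fun x hx y hy => ?_⟩
  · simp [hx]
  · simp only [Set.Finite.mem_toFinset]
    exact Or.inr (Set.mem_biUnion hx hy)

theorem betaPlus_eq_sum {T : Finset V} {x : V} (hx : ∀ y, b x y ≠ 0 ∨ b y x ≠ 0 → y ∈ T) :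
    betaPlus b x = ∑ y ∈ T, b x y :=
  finsum_eq_sum_of_support_subset _ fun y hy => hx y (Or.inl hy)

theorem betaMinus_eq_sum {T : Finset V} {x : V} (hx : ∀ y, b x y ≠ 0 ∨ b y x ≠ 0 → y ∈ T) :
    betaMinus b x = ∑ y ∈ T, b y x :=
  finsum_eq_sum_of_support_subset _ fun y hy => hx y (Or.inr hy)

theorem betaPlus_nonneg (hb : ∀ x y, 0 ≤ b x y) (x : V) : 0 ≤ betaPlus b x :=
  finsum_nonneg (hb x)

theorem sum_sum_mul_sub_eq_zero {T : Finset V} {g : V → ℝ}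
    (hbal : ∀ x ∈ T, g x ≠ 0 → ∑ y ∈ T, b x y = ∑ y ∈ T, b y x) :
    ∑ x ∈ T, ∑ y ∈ T, b x y * (g x - g y) = 0 := by
  have hrow : ∀ x ∈ T, (∑ y ∈ T, b x y) * g x = (∑ y ∈ T, b y x) * g x := by
    intro x hx
    by_cases hgx : g x = 0
    · simp [hgx]
    · rw [hbal x hx hgx]
  simp only [mul_sub, sum_sub_distrib, ← sum_mul]
  rw [sum_congr rfl hrow, sum_comm (f := fun x y => b x y * g y)]
  simp only [sum_mul, sub_self]

theorem re_sub_mul_conj (z w : ℂ) :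
    ((z - w) * conj z).re = ‖z - w‖ ^ 2 / 2 + (‖z‖ ^ 2 - ‖w‖ ^ 2) / 2 := by
  simp only [Complex.sq_norm, normSq_apply, mul_re, sub_re, sub_im, conj_re, conj_im]
  ring

theorem sum_sum_re_sub_mul_conj {T : Finset V} {f : V → ℂ}
    (hbal : ∀ x ∈ T, f x ≠ 0 → ∑ y ∈ T, b x y = ∑ y ∈ T, b y x) :
    ∑ x ∈ T, ∑ y ∈ T, b x y * ((f x - f y) * conj (f x)).re
      = 1 / 2 * ∑ x ∈ T, ∑ y ∈ T, b x y * ‖f x - f y‖ ^ 2 := by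
  have hzero := sum_sum_mul_sub_eq_zero (g := fun x => ‖f x‖ ^ 2)
    fun x hx hfx => hbal x hx (by simpa using hfx)
  calc ∑ x ∈ T, ∑ y ∈ T, b x y * ((f x - f y) * conj (f x)).re
      = ∑ x ∈ T, ∑ y ∈ T, (1 / 2 * (b x y * ‖f x - f y‖ ^ 2)
          + 1 / 2 * (b x y * (‖f x‖ ^ 2 - ‖f y‖ ^ 2))) := by
        simp only [re_sub_mul_conj]
        ring_nf
    _ = 1 / 2 * ∑ x ∈ T, ∑ y ∈ T, b x y * ‖f x - f y‖ ^ 2 := by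
        simp only [sum_add_distrib, ← mul_sum, hzero, mul_zero, add_zero]

theorem innerW_self_eq_sum {T : Finset V} {f : V → ℂ} (hfT : support f ⊆ T) :
    innerW m f f = ((∑ x ∈ T, m x * ‖f x‖ ^ 2 : ℝ) : ℂ) := by
  rw [innerW, finsum_eq_sum_of_support_subset _ fun x hx => hfT (by simp_all)]
  push_cast
  refine sum_congr rfl fun x _ => ?_
  rw [mul_assoc, mul_conj, normSq_eq_norm_sq]
  push_cast
  ring

theorem re_innerW_lap_eq (hm : ∀ x, m x ≠ 0) (hβ : ∀ x, betaPlus b x = betaMinus b x)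
    {T : Finset V} {f : V → ℂ} (hfT : support f ⊆ T)
    (hT : ∀ x ∈ support f, ∀ y, b x y ≠ 0 ∨ b y x ≠ 0 → y ∈ T) :
    (innerW m (lap b m f) f).re = 1 / 2 * ∑ x ∈ T, ∑ y ∈ T, b x y * ‖f x - f y‖ ^ 2 := by
  have hsummand : ∀ x ∈ T, (m x : ℂ) * lap b m f x * conj (f x)
      = ∑ y ∈ T, (b x y : ℂ) * ((f x - f y) * conj (f x)) := by
    intro x _
    by_cases hfx : f x = 0
    · simp [hfx]
    · rw [lap, finsum_eq_sum_of_support_subset _ fun y hy => hT x hfx y (Or.inl (by simp_all))]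
      field_simp [ofReal_ne_zero.mpr (hm x)]
      simp only [sum_mul]
      exact sum_congr rfl fun y _ => by ring
  have hbal : ∀ x ∈ T, f x ≠ 0 → ∑ y ∈ T, b x y = ∑ y ∈ T, b y x := fun x _ hfx => by
    rw [← betaPlus_eq_sum (hT x hfx), ← betaMinus_eq_sum (hT x hfx), hβ]
  rw [innerW, finsum_eq_sum_of_support_subset _ fun x hx => hfT (by simp_all),
    sum_congr rfl hsummand, ← sum_sum_re_sub_mul_conj hbal]
  simp only [re_sum, re_ofReal_mul]

theorem re_innerW_lap_nonneg (hb : ∀ x y, 0 ≤ b x y)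
    (hloc : ∀ x, {y | b x y ≠ 0 ∨ b y x ≠ 0}.Finite) (hm : ∀ x, m x ≠ 0)
    (hβ : ∀ x, betaPlus b x = betaMinus b x) {f : V → ℂ} (hf : (support f).Finite) :
    0 ≤ (innerW m (lap b m f) f).re := by
  obtain ⟨T, hfT, hT⟩ := exists_finset_superset_nbhd hloc hf
  rw [re_innerW_lap_eq hm hβ hfT hT]
  exact mul_nonneg (by norm_num) (sum_nonneg fun x _ => sum_nonneg fun y _ =>
    mul_nonneg (hb x y) (sq_nonneg _))

theorem bdryWeight_nonneg [DecidableEq V] (hb : ∀ x y, 0 ≤ b x y) (U : Finset V) :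
    0 ≤ bdryWeight b U :=
  sum_nonneg fun x _ => finsum_nonneg fun y => by
    split_ifs
    exacts [le_rfl, add_nonneg (hb x y) (hb y x)]

theorem bdryWeight_eq_sum_sum [DecidableEq V] {U T : Finset V} (hUT : U ⊆ T)
    (hT : ∀ x ∈ U, ∀ y, b x y ≠ 0 ∨ b y x ≠ 0 → y ∈ T) :
    bdryWeight b U = ∑ x ∈ T, ∑ y ∈ T,
      b x y * |(U : Set V).indicator 1 x - (U : Set V).indicator (1 : V → ℝ) y| := by
  have hsplit : ∀ x y, b x y * |(U : Set V).indicator 1 x - (U : Set V).indicator (1 : V → ℝ) y|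
      = (if x ∈ U then (if y ∈ U then 0 else b x y) else 0)
        + (if y ∈ U then (if x ∈ U then 0 else b x y) else 0) := by
    intro x y
    by_cases hx : x ∈ U <;> by_cases hy : y ∈ U <;> simp [hx, hy]
  have hinner : ∀ x ∈ U, ∑ᶠ y, (if y ∈ U then 0 else b x y + b y x)
      = ∑ y ∈ T, ((if y ∈ U then 0 else b x y) + (if y ∈ U then 0 else b y x)) := by
    intro x hx
    rw [finsum_eq_sum_of_support_subset _ fun y hy => ?_]
    · exact sum_congr rfl fun y _ => by split_ifs <;> simp
    · by_cases hyU : y ∈ U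
      · exact hUT hyU
      · refine hT x hx y ?_
        by_contra! h
        simp [hyU, h.1, h.2] at hy
  simp only [hsplit, sum_add_distrib]
  rw [sum_comm (s := T) (t := T) (f := fun x y => if y ∈ U then _ else 0)]
  simp only [← ite_sum_zero, sum_ite_mem, inter_eq_right.mpr hUT, bdryWeight, ← sum_add_distrib]
  exact sum_congr rfl hinner

noncomputable def normalizedIndicator (m : V → ℝ) (U : Finset V) : V → ℂ :=
  fun x => ((√(∑ x ∈ U, m x))⁻¹ * (U : Set V).indicator 1 x : ℝ)

theorem support_normalizedIndicator_subset (U : Finset V) :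
    support (normalizedIndicator m U) ⊆ U := fun x hx => by
  by_contra hxU
  simp [normalizedIndicator, hxU] at hx

theorem innerW_normalizedIndicator (hm : ∀ x, 0 < m x) {U : Finset V} (hU : U.Nonempty) :
    innerW m (normalizedIndicator m U) (normalizedIndicator m U) = 1 := by
  have hmU : 0 < ∑ x ∈ U, m x := sum_pos (fun x _ => hm x) hU
  rw [innerW_self_eq_sum (support_normalizedIndicator_subset U)]
  have hterm : ∀ x ∈ U, m x * ‖normalizedIndicator m U x‖ ^ 2 = m x / ∑ x ∈ U, m x := by
    intro x hx
    simp [normalizedIndicator, hx, inv_pow, Real.sq_sqrt hmU.le, div_eq_mul_inv]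
  rw [sum_congr rfl hterm, ← sum_div, div_self hmU.ne', ofReal_one]

theorem re_innerW_lap_normalizedIndicator [DecidableEq V]
    (hloc : ∀ x, {y | b x y ≠ 0 ∨ b y x ≠ 0}.Finite) (hm : ∀ x, 0 < m x)
    (hβ : ∀ x, betaPlus b x = betaMinus b x) (U : Finset V) :
    (innerW m (lap b m (normalizedIndicator m U)) (normalizedIndicator m U)).re
      = bdryWeight b U / (2 * ∑ x ∈ U, m x) := by
  obtain ⟨T, hUT, hT⟩ := exists_finset_superset_nbhd hloc U.finite_toSet
  have hterm : ∀ x y, ‖normalizedIndicator m U x - normalizedIndicator m U y‖ ^ 2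
      = (∑ x ∈ U, m x)⁻¹ * |(U : Set V).indicator 1 x - (U : Set V).indicator (1 : V → ℝ) y| := by
    intro x y
    by_cases hx : x ∈ U <;> by_cases hy : y ∈ U <;>
      simp [normalizedIndicator, hx, hy, inv_pow, Real.sq_sqrt (sum_nonneg fun x _ => (hm x).le)]
  rw [re_innerW_lap_eq (fun x => (hm x).ne') hβ
      ((support_normalizedIndicator_subset U).trans hUT)
      fun x hx => hT x (support_normalizedIndicator_subset U hx),
    bdryWeight_eq_sum_sum (Finset.coe_subset.mp hUT) hT]
  simp only [hterm, mul_left_comm _ (∑ x ∈ U, m x)⁻¹, ← mul_sum]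
  field_simp

theorem cheeger_nonneg [DecidableEq V] (hb : ∀ x y, 0 ≤ b x y) (hm : ∀ x, 0 ≤ m x)
    (Ω : Set V) : 0 ≤ cheeger b m Ω :=
  Real.sInf_nonneg <| by
    rintro _ ⟨U, -, -, rfl⟩
    exact div_nonneg (bdryWeight_nonneg hb U) (sum_nonneg fun x _ => hm x)

theorem cheeger_le [DecidableEq V] (hb : ∀ x y, 0 ≤ b x y) (hm : ∀ x, 0 ≤ m x) {Ω : Set V}
    {U : Finset V} (hU : U.Nonempty) (hUΩ : ↑U ⊆ Ω) :
    cheeger b m Ω ≤ bdryWeight b U / ∑ x ∈ U, m x := by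
  refine csInf_le ⟨0, ?_⟩ ⟨U, hU, hUΩ, rfl⟩
  rintro _ ⟨W, -, -, rfl⟩
  exact div_nonneg (bdryWeight_nonneg hb W) (sum_nonneg fun x _ => hm x)

theorem abs_sub_eq_abs_sub_sub_indicator_add {U : Set V} {g : V → ℝ} {t : ℝ} (ht : 0 ≤ t)
    (hgt : ∀ x ∈ U, t ≤ g x) (hgU : ∀ x ∉ U, g x = 0) (x y : V) :
    |g x - g y| = |(g x - t * U.indicator 1 x) - (g y - t * U.indicator 1 y)|
      + t * |U.indicator 1 x - U.indicator (1 : V → ℝ) y| := by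
  have hsplit : g x - g y = ((g x - t * U.indicator 1 x) - (g y - t * U.indicator 1 y))
      + t * (U.indicator 1 x - U.indicator (1 : V → ℝ) y) := by ring
  rw [hsplit, abs_add_eq_add_abs_iff _ _ |>.mpr, abs_mul, abs_of_nonneg ht]
  by_cases hx : x ∈ U <;> by_cases hy : y ∈ U <;>
    simp only [hx, hy, hgU, Set.indicator_of_mem, Set.indicator_of_notMem, not_false_eq_true,
      Pi.one_apply, sub_self, mul_zero, sub_zero, zero_sub, mul_one, le_refl, and_true]
  · exact le_total _ _
  · exact Or.inl ⟨by linarith [hgt x hx], ht⟩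
  · exact Or.inr ⟨by linarith [hgt y hy], by linarith⟩
  · simp

theorem sum_sum_abs_sub_eq_add_bdryWeight [DecidableEq V] {U T : Finset V} (hUT : U ⊆ T)
    (hT : ∀ x ∈ U, ∀ y, b x y ≠ 0 ∨ b y x ≠ 0 → y ∈ T) {g : V → ℝ} {t : ℝ} (ht : 0 ≤ t)
    (hgt : ∀ x ∈ U, t ≤ g x) (hgU : ∀ x ∉ (U : Set V), g x = 0) :
    ∑ x ∈ T, ∑ y ∈ T, b x y * |g x - g y|
      = ∑ x ∈ T, ∑ y ∈ T, b x y * |(g x - t * (U : Set V).indicator 1 x)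
          - (g y - t * (U : Set V).indicator 1 y)| + t * bdryWeight b U := by
  rw [bdryWeight_eq_sum_sum hUT hT, mul_sum]
  simp only [mul_sum, ← sum_add_distrib]
  refine sum_congr rfl fun x _ => sum_congr rfl fun y _ => ?_
  rw [abs_sub_eq_abs_sub_sub_indicator_add ht hgt hgU x y]
  ring

theorem cheeger_mul_sum_le_sum_sum_abs_sub [DecidableEq V] (hb : ∀ x y, 0 ≤ b x y)
    (hm : ∀ x, 0 < m x) {Ω : Set V} {T : Finset V} {g : V → ℝ} (hg : 0 ≤ g)
    (hgΩ : support g ⊆ Ω) (hgT : support g ⊆ T)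
    (hT : ∀ x ∈ support g, ∀ y, b x y ≠ 0 ∨ b y x ≠ 0 → y ∈ T) :
    cheeger b m Ω * ∑ x ∈ T, m x * g x ≤ ∑ x ∈ T, ∑ y ∈ T, b x y * |g x - g y| := by
  obtain ⟨U, hU⟩ : ∃ U : Finset V, support g = U :=
    ⟨(T.finite_toSet.subset hgT).toFinset, by simp⟩
  induction U using Finset.strongInduction generalizing g with
  | H U ih =>
  rcases U.eq_empty_or_nonempty with rfl | hUne
  · obtain rfl : g = 0 := support_eq_empty_iff.mp (by simpa using hU)
    simp
  obtain ⟨x₀, hx₀, hmin⟩ := U.exists_min_image g hUne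
  have hgU : ∀ x ∉ (U : Set V), g x = 0 := fun x hx => by
    rwa [← notMem_support, hU]
  have ht : 0 < g x₀ := (hg x₀).lt_of_ne (Ne.symm (mem_support.mp (hU ▸ hx₀)))
  set t := g x₀
  set g' : V → ℝ := fun x => g x - t * (U : Set V).indicator 1 x with hg'
  have hg'U : ∀ x, g' x ≠ 0 → x ∈ U := fun x hx => by
    by_contra hxU
    simp [hg', hgU x hxU, hxU] at hx
  have hg'0 : 0 ≤ g' := fun x => by
    by_cases hx : x ∈ U
    · simpa [hg', hx] using hmin x hx
    · simp [hg', hgU x hx, hx]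
  have hU' : U.filter (g' · ≠ 0) ⊂ U :=
    filter_ssubset.mpr ⟨x₀, hx₀, by simp [hg', hx₀, t]⟩
  have hsupp' : support g' ⊆ support g := fun x hx => hU ▸ hg'U x hx
  have IH := ih _ hU' hg'0 (hsupp'.trans hgΩ) (hsupp'.trans hgT)
    (fun x hx => hT x (hsupp' hx)) (by ext x; simpa using hg'U x)
  have hUT : U ⊆ T := coe_subset.mp (hU ▸ hgT)
  have hmass : ∑ x ∈ T, m x * g x = ∑ x ∈ T, m x * g' x + t * ∑ x ∈ U, m x := by
    rw [← sum_indicator_subset m hUT, mul_sum, ← sum_add_distrib]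
    refine sum_congr rfl fun x _ => ?_
    by_cases hx : x ∈ U <;> simp [hg', hx]
    ring
  have hvar := sum_sum_abs_sub_eq_add_bdryWeight hUT (fun x hx => hT x (hU ▸ hx))
    ht.le (fun x hx => hmin x hx) hgU
  have hcut : cheeger b m Ω * ∑ x ∈ U, m x ≤ bdryWeight b U :=
    (le_div_iff₀ (sum_pos (fun x _ => hm x) hUne)).mp
      (cheeger_le hb (fun x => (hm x).le) hUne (hU ▸ hgΩ))
  calc cheeger b m Ω * ∑ x ∈ T, m x * g x
      = cheeger b m Ω * ∑ x ∈ T, m x * g' x + t * (cheeger b m Ω * ∑ x ∈ U, m x) := by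
        rw [hmass]; ring
    _ ≤ ∑ x ∈ T, ∑ y ∈ T, b x y * |g' x - g' y| + t * bdryWeight b U := by
        gcongr
    _ = ∑ x ∈ T, ∑ y ∈ T, b x y * |g x - g y| := hvar.symm

theorem sum_sum_mul_add_norm_sq_le (hb : ∀ x y, 0 ≤ b x y)
    (hβ : ∀ x, betaPlus b x = betaMinus b x) {M : ℝ} {Ω : Set V}
    (hMb : ∀ x ∈ Ω, betaPlus b x ≤ M * m x) {T : Finset V} {f : V → ℂ}
    (hfΩ : support f ⊆ Ω) (hT : ∀ x ∈ support f, ∀ y, b x y ≠ 0 ∨ b y x ≠ 0 → y ∈ T) :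
    ∑ x ∈ T, ∑ y ∈ T, b x y * (‖f x‖ + ‖f y‖) ^ 2 ≤ 4 * M * ∑ x ∈ T, m x * ‖f x‖ ^ 2 := by
  have hrow : ∀ x ∈ T, (∑ y ∈ T, b x y) * ‖f x‖ ^ 2 ≤ M * (m x * ‖f x‖ ^ 2) := by
    intro x _
    by_cases hfx : f x = 0
    · simp [hfx]
    · rw [← betaPlus_eq_sum (hT x hfx), ← mul_assoc]
      exact mul_le_mul_of_nonneg_right (hMb x (hfΩ hfx)) (sq_nonneg _)
  have hcol : ∀ y ∈ T, (∑ x ∈ T, b x y) * ‖f y‖ ^ 2 ≤ M * (m y * ‖f y‖ ^ 2) := by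
    intro y _
    by_cases hfy : f y = 0
    · simp [hfy]
    · rw [← betaMinus_eq_sum (hT y hfy), ← hβ, ← mul_assoc]
      exact mul_le_mul_of_nonneg_right (hMb y (hfΩ hfy)) (sq_nonneg _)
  calc ∑ x ∈ T, ∑ y ∈ T, b x y * (‖f x‖ + ‖f y‖) ^ 2
      ≤ ∑ x ∈ T, ∑ y ∈ T, (2 * (b x y * ‖f x‖ ^ 2) + 2 * (b x y * ‖f y‖ ^ 2)) := by
        gcongr with x _ y _
        nlinarith [mul_nonneg (hb x y) (sq_nonneg (‖f x‖ - ‖f y‖))]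
    _ = 2 * ∑ x ∈ T, (∑ y ∈ T, b x y) * ‖f x‖ ^ 2
          + 2 * ∑ y ∈ T, (∑ x ∈ T, b x y) * ‖f y‖ ^ 2 := by
        simp only [sum_add_distrib, ← mul_sum, sum_mul]
        rw [sum_comm (f := fun x y => b x y * ‖f y‖ ^ 2)]
    _ ≤ 2 * ∑ x ∈ T, M * (m x * ‖f x‖ ^ 2) + 2 * ∑ y ∈ T, M * (m y * ‖f y‖ ^ 2) := by
        linarith [sum_le_sum hrow, sum_le_sum hcol]
    _ = 4 * M * ∑ x ∈ T, m x * ‖f x‖ ^ 2 := by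
        rw [← mul_sum]
        ring

theorem sq_sum_sum_abs_sub_norm_sq_le (hb : ∀ x y, 0 ≤ b x y) (T : Finset V) (f : V → ℂ) :
    (∑ x ∈ T, ∑ y ∈ T, b x y * |‖f x‖ ^ 2 - ‖f y‖ ^ 2|) ^ 2
      ≤ (∑ x ∈ T, ∑ y ∈ T, b x y * (‖f x‖ + ‖f y‖) ^ 2)
        * ∑ x ∈ T, ∑ y ∈ T, b x y * ‖f x - f y‖ ^ 2 := by
  simp only [← sum_product' T T]
  refine sum_sq_le_sum_mul_sum_of_sq_le_mul _ (fun p _ => by positivity [hb p.1 p.2])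
    (fun p _ => by positivity [hb p.1 p.2]) fun p _ => ?_
  obtain ⟨x, y⟩ := p
  have hdiff : |‖f x‖ - ‖f y‖| ≤ ‖f x - f y‖ := abs_norm_sub_norm_le _ _
  calc (b x y * |‖f x‖ ^ 2 - ‖f y‖ ^ 2|) ^ 2
      = (b x y * (‖f x‖ + ‖f y‖)) ^ 2 * |‖f x‖ - ‖f y‖| ^ 2 := by
        rw [sq_sub_sq, abs_mul, abs_of_nonneg (by positivity : 0 ≤ ‖f x‖ + ‖f y‖)]
        ring
    _ ≤ (b x y * (‖f x‖ + ‖f y‖)) ^ 2 * ‖f x - f y‖ ^ 2 := by gcongr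
    _ = b x y * (‖f x‖ + ‖f y‖) ^ 2 * (b x y * ‖f x - f y‖ ^ 2) := by ring

theorem cheeger_sq_le_eight_mul_re_innerW_lap [DecidableEq V] (hb : ∀ x y, 0 ≤ b x y)
    (hloc : ∀ x, {y | b x y ≠ 0 ∨ b y x ≠ 0}.Finite) (hm : ∀ x, 0 < m x)
    (hβ : ∀ x, betaPlus b x = betaMinus b x) {M : ℝ} {Ω : Set V}
    (hMb : ∀ x ∈ Ω, betaPlus b x ≤ M * m x) {f : V → ℂ} (hf : (support f).Finite)
    (hfΩ : support f ⊆ Ω) (hf1 : innerW m f f = 1) :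
    cheeger b m Ω ^ 2 ≤ 8 * M * (innerW m (lap b m f) f).re := by
  obtain ⟨T, hfT, hT⟩ := exists_finset_superset_nbhd hloc hf
  have hnorm : ∑ x ∈ T, m x * ‖f x‖ ^ 2 = 1 := by
    exact_mod_cast (innerW_self_eq_sum hfT).symm.trans hf1
  have hsupp : support (fun x => ‖f x‖ ^ 2) = support f := by ext; simp
  have hcoarea := cheeger_mul_sum_le_sum_sum_abs_sub hb hm (fun x => sq_nonneg ‖f x‖)
    (hsupp ▸ hfΩ) (hsupp ▸ hfT) (hsupp ▸ hT)
  rw [hnorm, mul_one] at hcoarea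
  rw [re_innerW_lap_eq (fun x => (hm x).ne') hβ hfT hT]
  calc cheeger b m Ω ^ 2
      ≤ (∑ x ∈ T, ∑ y ∈ T, b x y * |‖f x‖ ^ 2 - ‖f y‖ ^ 2|) ^ 2 := by
        gcongr
        exact cheeger_nonneg hb (fun x => (hm x).le) Ω
    _ ≤ (∑ x ∈ T, ∑ y ∈ T, b x y * (‖f x‖ + ‖f y‖) ^ 2)
          * ∑ x ∈ T, ∑ y ∈ T, b x y * ‖f x - f y‖ ^ 2 := sq_sum_sum_abs_sub_norm_sq_le hb T f
    _ ≤ 4 * M * ∑ x ∈ T, ∑ y ∈ T, b x y * ‖f x - f y‖ ^ 2 := by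
        gcongr
        · exact sum_nonneg fun x _ => sum_nonneg fun y _ => by positivity [hb x y]
        · simpa [hnorm] using sum_sum_mul_add_norm_sq_le hb hβ hMb hfΩ hT
    _ = 8 * M * (1 / 2 * ∑ x ∈ T, ∑ y ∈ T, b x y * ‖f x - f y‖ ^ 2) := by ring

theorem nuD_le_re_innerW_lap (hb : ∀ x y, 0 ≤ b x y)
    (hloc : ∀ x, {y | b x y ≠ 0 ∨ b y x ≠ 0}.Finite) (hm : ∀ x, m x ≠ 0)
    (hβ : ∀ x, betaPlus b x = betaMinus b x) {Ω : Set V} {f : V → ℂ}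
    (hf : (support f).Finite) (hfΩ : support f ⊆ Ω) (hf1 : innerW m f f = 1) :
    nuD b m Ω ≤ (innerW m (lap b m f) f).re := by
  refine csInf_le ⟨0, ?_⟩ ⟨f, hf, hfΩ, hf1, rfl⟩
  rintro _ ⟨g, hg, -, -, rfl⟩
  exact re_innerW_lap_nonneg hb hloc hm hβ hg

theorem two_mul_nuD_le_cheeger [DecidableEq V] (hb : ∀ x y, 0 ≤ b x y)
    (hloc : ∀ x, {y | b x y ≠ 0 ∨ b y x ≠ 0}.Finite) (hm : ∀ x, 0 < m x)
    (hβ : ∀ x, betaPlus b x = betaMinus b x) {Ω : Set V} (hΩ : Ω.Nonempty) :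
    2 * nuD b m Ω ≤ cheeger b m Ω := by
  obtain ⟨x₀, hx₀⟩ := hΩ
  refine le_csInf ⟨_, {x₀}, singleton_nonempty x₀, by simpa using hx₀, rfl⟩ ?_
  rintro _ ⟨U, hU, hUΩ, rfl⟩
  have hν := nuD_le_re_innerW_lap hb hloc (fun x => (hm x).ne') hβ
    ((U.finite_toSet).subset (support_normalizedIndicator_subset U))
    ((support_normalizedIndicator_subset U).trans hUΩ) (innerW_normalizedIndicator hm hU)
  rw [re_innerW_lap_normalizedIndicator hloc hm hβ U, ← div_div, div_right_comm] at hν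
  linarith

theorem cheeger_sq_div_eight_le_mul_nuD [DecidableEq V] (hb : ∀ x y, 0 ≤ b x y)
    (hloc : ∀ x, {y | b x y ≠ 0 ∨ b y x ≠ 0}.Finite) (hm : ∀ x, 0 < m x)
    (hβ : ∀ x, betaPlus b x = betaMinus b x) {M : ℝ} (hM : 0 ≤ M) {Ω : Set V}
    (hΩ : Ω.Nonempty) (hMb : ∀ x ∈ Ω, betaPlus b x ≤ M * m x) :
    cheeger b m Ω ^ 2 / 8 ≤ M * nuD b m Ω := by
  obtain ⟨x₀, hx₀⟩ := hΩ
  have hx₀Ω : ↑({x₀} : Finset V) ⊆ Ω := by simpa using hx₀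
  -- Unlike dividing by `M`, scaling the set works also for `M = 0`.
  rw [nuD, ← smul_eq_mul, ← Real.sInf_smul_of_nonneg hM]
  refine le_csInf (Set.Nonempty.smul_set ⟨_, normalizedIndicator m {x₀},
    (finite_toSet _).subset (support_normalizedIndicator_subset _),
    (support_normalizedIndicator_subset _).trans hx₀Ω,
    innerW_normalizedIndicator hm (singleton_nonempty x₀), rfl⟩) ?_
  rintro _ ⟨_, ⟨f, hf, hfΩ, hf1, rfl⟩, rfl⟩
  have := cheeger_sq_le_eight_mul_re_innerW_lap hb hloc hm hβ hMb hf hfΩ hf1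
  simp only [smul_eq_mul]
  linarith

end

theorem cheeger_inequality_general
    (V : Type*) [DecidableEq V] (b : V → V → ℝ) (m : V → ℝ)
    (hb_nonneg : ∀ x y, 0 ≤ b x y)
    (hloc_fin : ∀ x, {y | b x y ≠ 0 ∨ b y x ≠ 0}.Finite)
    (hm_pos : ∀ x, 0 < m x)
    (hβ : ∀ x, betaPlus b x = betaMinus b x)
    (Ω : Set V) (hΩ : Ω.Nonempty)
    (hM : BddAbove {r : ℝ | ∃ x ∈ Ω, r = betaPlus b x / m x}) :
    (cheeger b m Ω) ^ 2 / 8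
        ≤ sSup {r : ℝ | ∃ x ∈ Ω, r = betaPlus b x / m x} * nuD b m Ω ∧
    sSup {r : ℝ | ∃ x ∈ Ω, r = betaPlus b x / m x} * nuD b m Ω
        ≤ sSup {r : ℝ | ∃ x ∈ Ω, r = betaPlus b x / m x} * cheeger b m Ω / 2 := by
  set M := sSup {r : ℝ | ∃ x ∈ Ω, r = betaPlus b x / m x}
  obtain ⟨x₀, hx₀⟩ := hΩ
  have hM0 : 0 ≤ M := (div_nonneg (betaPlus_nonneg hb_nonneg x₀) (hm_pos x₀).le).trans
    (le_csSup hM ⟨x₀, hx₀, rfl⟩)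
  have hMb : ∀ x ∈ Ω, betaPlus b x ≤ M * m x := fun x hx =>
    (div_le_iff₀ (hm_pos x)).mp (le_csSup hM ⟨x, hx, rfl⟩)
  have hν := two_mul_nuD_le_cheeger hb_nonneg hloc_fin hm_pos hβ ⟨x₀, hx₀⟩
  exact ⟨cheeger_sq_div_eight_le_mul_nuD hb_nonneg hloc_fin hm_pos hβ hM0 ⟨x₀, hx₀⟩ hMb,
    by linarith [mul_le_mul_of_nonneg_left hν hM0]⟩

/-- Cheeger inequality: assume Assumption (β), let `Ω ⊆ V` be nonempty and
suppose `M_Ω = sup { β⁺(x)/m(x) : x ∈ Ω } < ∞`. Then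
`h(Ω)²/8 ≤ M_Ω ν(Δ^D_Ω) ≤ (1/2) M_Ω h(Ω)`. -/
theorem cheeger_inequality
    (V : Type*) [Countable V] [DecidableEq V] (b : V → V → ℝ) (m : V → ℝ)
    (hb_nonneg : ∀ x y, 0 ≤ b x y)
    (hb_loop : ∀ x, b x x = 0)
    (hloc_fin : ∀ x, {y | b x y ≠ 0 ∨ b y x ≠ 0}.Finite)
    (hm_pos : ∀ x, 0 < m x)
    (hβp_pos : ∀ x, 0 < betaPlus b x)
    (hβm_pos : ∀ x, 0 < betaMinus b x)
    (hβ : ∀ x, betaPlus b x = betaMinus b x)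
    (Ω : Set V) (hΩ : Ω.Nonempty)
    (hM : BddAbove {r : ℝ | ∃ x ∈ Ω, r = betaPlus b x / m x}) :
    (cheeger b m Ω) ^ 2 / 8
        ≤ sSup {r : ℝ | ∃ x ∈ Ω, r = betaPlus b x / m x} * nuD b m Ω ∧
    sSup {r : ℝ | ∃ x ∈ Ω, r = betaPlus b x / m x} * nuD b m Ω
        ≤ sSup {r : ℝ | ∃ x ∈ Ω, r = betaPlus b x / m x} * cheeger b m Ω / 2 :=
  cheeger_inequality_general V b m hb_nonneg hloc_fin hm_pos hβ Ω hΩ hM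
end
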